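/- Liveness bound: Suppose each round is good independently with probability at least 1/2, and a transaction tx is included once K good rounds have elapsed (where K = ⌈T_N / T_H⌉ for total pending honest transactions T_N and per-round throughput T_H). If T > 4K and T ≥ 16·c·ln N, then tx is included within T rounds with probability at least 1 - 1/N^c. -/

import Mathlib

/-!
Write `S` for the number of good rounds among the `T` rounds. Each round is good with
probability `p ≥ 1/2`, so `𝔼 S ≥ T/2`, while `K < T/4`; hence `S ≤ K` forces `S` to fall at
least `T/4` below its mean. By Hoeffding's inequality this has probability at most
`exp (-2 (T/4)² / T) = exp (-T/8)`, and `T ≥ 16 c log N` makes this at most `N^(-c)`.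
-/

open MeasureTheory ProbabilityTheory Real

section

variable {Ω : Type*} [MeasurableSpace Ω] {μ : Measure Ω}

lemma integral_eq_measureReal_of_eq_zero_or_eq_one {X : Ω → ℝ} (hX : Measurable X)
    (h01 : ∀ ω, X ω = 0 ∨ X ω = 1) : μ[X] = μ.real {ω | X ω = 1} := by
  have hX_eq : X = Set.indicator {ω | X ω = 1} 1 := by
    funext ω
    rcases h01 ω with h | h <;> simp [h]
  conv_lhs => rw [hX_eq]
  exact integral_indicator_one (measurableSet_eq_fun hX measurable_const)

lemma measureReal_sum_le_sum_integral_sub_le [IsProbabilityMeasure μ] {ι : Type*} [Fintype ι]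
    {X : ι → Ω → ℝ} (hind : iIndepFun X μ) (hmeas : ∀ i, Measurable (X i))
    (hX : ∀ i ω, X i ω ∈ Set.Icc (0 : ℝ) 1) {ε : ℝ} (hε : 0 ≤ ε) :
    μ.real {ω | ∑ i, X i ω ≤ ∑ i, μ[X i] - ε} ≤ exp (-2 * ε ^ 2 / Fintype.card ι) := by
  have hsubG : ∀ i ∈ Finset.univ, HasSubgaussianMGF (fun ω ↦ μ[X i] - X i ω) (1 / 4) μ := by
    intro i _
    have h := (hasSubgaussianMGF_of_mem_Icc (μ := μ) (hmeas i).aemeasurable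
      (ae_of_all _ (hX i))).neg
    rw [show (‖(1 : ℝ) - 0‖₊ / 2) ^ 2 = (1 / 4 : NNReal) by norm_num] at h
    exact h.congr (ae_of_all _ fun ω ↦ by simp)
  have hind' : iIndepFun (fun i ω ↦ μ[X i] - X i ω) μ := by
    exact hind.comp (fun i y ↦ μ[X i] - y) fun _ ↦ measurable_const.sub measurable_id
  convert HasSubgaussianMGF.measure_sum_ge_le_of_iIndepFun hind' hsubG hε using 2
  · ext ω
    simp only [Set.mem_ofPred_eq, Finset.sum_sub_distrib]
    exact le_sub_comm
  · push_cast
    simp only [Finset.sum_const, Finset.card_univ, nsmul_eq_mul]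
    ring

lemma measureReal_sum_le_le_exp_neg_card_div_eight [IsProbabilityMeasure μ] {ι : Type*}
    [Fintype ι] {X : ι → Ω → ℝ} (hind : iIndepFun X μ) (hmeas : ∀ i, Measurable (X i))
    (h01 : ∀ i ω, X i ω = 0 ∨ X i ω = 1) (hmean : ∀ i, 1 / 2 ≤ μ[X i]) {a : ℝ}
    (ha : 4 * a ≤ Fintype.card ι) :
    μ.real {ω | ∑ i, X i ω ≤ a} ≤ exp (-Fintype.card ι / 8) := by
  set n : ℝ := (Fintype.card ι : ℝ)
  have hX : ∀ i ω, X i ω ∈ Set.Icc (0 : ℝ) 1 := fun i ω ↦ by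
    rcases h01 i ω with h | h <;> simp [h]
  have hsum_mean : n / 2 ≤ ∑ i, μ[X i] :=
    calc n / 2 = ∑ _i : ι, (1 / 2 : ℝ) := by simp [n, div_eq_mul_inv]
      _ ≤ ∑ i, μ[X i] := Finset.sum_le_sum fun i _ ↦ hmean i
  calc μ.real {ω | ∑ i, X i ω ≤ a}
      ≤ μ.real {ω | ∑ i, X i ω ≤ ∑ i, μ[X i] - n / 4} :=
        measureReal_mono fun ω (hω : ∑ i, X i ω ≤ a) ↦ by
          simp only [Set.mem_ofPred_eq]
          linarith
    _ ≤ exp (-2 * (n / 4) ^ 2 / n) :=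
        measureReal_sum_le_sum_integral_sub_le hind hmeas hX (by positivity)
    _ = exp (-n / 8) := by
        congr 1
        rcases eq_or_ne n 0 with hn | hn
        · simp [hn]
        · field_simp
          ring

lemma one_sub_ofReal_le_measure_of_compl_subset [IsProbabilityMeasure μ] {s t : Set Ω}
    (hst : sᶜ ⊆ t) {δ : ℝ} (ht : μ.real t ≤ δ) : 1 - ENNReal.ofReal δ ≤ μ s := by
  rw [tsub_le_iff_right]
  calc 1 = μ (s ∪ sᶜ) := by rw [Set.union_compl_self, measure_univ]
    _ ≤ μ s + μ t := (measure_union_le _ _).trans (by gcongr)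
    _ ≤ μ s + ENNReal.ofReal δ := by
        rw [← ofReal_measureReal (s := t)]
        gcongr

end

theorem liveness_bound_general {Ω : Type*} [MeasurableSpace Ω]
    (μ : Measure Ω) [IsProbabilityMeasure μ]
    (T K N : ℕ) (hN : 2 ≤ N) (p c : ℝ) (hp : 1/2 ≤ p)
    (X : Fin T → Ω → ℝ)  -- indicator that round i is good
    (hmeas : ∀ i, Measurable (X i))
    (h01 : ∀ i ω, X i ω = 0 ∨ X i ω = 1)
    (hber : ∀ i, μ {ω | X i ω = 1} = ENNReal.ofReal p)
    (hind : iIndepFun X μ)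
    (hT : 4 * K < T)
    (hTc : 16 * c * Real.log N ≤ (T : ℝ)) :
    -- the event "at least K good rounds occur among the T rounds",
    -- i.e. tx is included within T rounds
    1 - ENNReal.ofReal (1 / (N : ℝ) ^ c)
      ≤ μ {ω | (K : ℝ) ≤ ∑ i, X i ω} := by
  have hmean : ∀ i, 1 / 2 ≤ μ[X i] := fun i ↦ by
    rwa [integral_eq_measureReal_of_eq_zero_or_eq_one (hmeas i) (h01 i), measureReal_def, hber,
      ENNReal.toReal_ofReal (by linarith)]
  have htail : μ.real {ω | ∑ i, X i ω ≤ K} ≤ exp (-T / 8) := by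
    simpa only [Fintype.card_fin] using measureReal_sum_le_le_exp_neg_card_div_eight hind hmeas
      h01 hmean (a := K) (by simp only [Fintype.card_fin]; exact_mod_cast hT.le)
  have hexp : exp (-T / 8) ≤ 1 / (N : ℝ) ^ c := by
    have hN0 : (0 : ℝ) < N := Nat.cast_pos.mpr (by omega)
    rw [rpow_def_of_pos hN0, one_div, ← exp_neg, exp_le_exp]
    have hT0 : (0 : ℝ) ≤ T := T.cast_nonneg
    linarith
  exact one_sub_ofReal_le_measure_of_compl_subset
    (fun ω (hω : ¬ (K : ℝ) ≤ ∑ i, X i ω) ↦ (not_le.mp hω).le) (htail.trans hexp)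

/-- Liveness bound: if each round is good independently with probability at
least `1/2` and a transaction is included once `K` good rounds have elapsed,
then for `T > 4K` and `T ≥ 16·c·ln N` the transaction is included within `T`
rounds with probability at least `1 - 1/N^c`. -/
theorem liveness_bound {Ω : Type*} [MeasurableSpace Ω]
    (μ : Measure Ω) [IsProbabilityMeasure μ]
    (T K N : ℕ) (hN : 2 ≤ N) (p c : ℝ) (hp : 1/2 ≤ p) (hc : 1 ≤ c)
    (X : Fin T → Ω → ℝ)  -- indicator that round i is good
    (hmeas : ∀ i, Measurable (X i))
    (h01 : ∀ i ω, X i ω = 0 ∨ X i ω = 1)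
    (hber : ∀ i, μ {ω | X i ω = 1} = ENNReal.ofReal p)
    (hind : iIndepFun X μ)
    (hT : 4 * K < T)
    (hTc : 16 * c * Real.log N ≤ (T : ℝ)) :
    -- the event "at least K good rounds occur among the T rounds",
    -- i.e. tx is included within T rounds
    1 - ENNReal.ofReal (1 / (N : ℝ) ^ c)
      ≤ μ {ω | (K : ℝ) ≤ ∑ i, X i ω} :=
  liveness_bound_general μ T K N hN p c hp X hmeas h01 hber hind hT hTc
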